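/- arXiv:1704.01439 — 14 statements merged into one kernel-verified Lean document; each statement's English description precedes it below -/
import Mathlib

section
/- Let n ≥ 2 be a squarefree integer, let e' be a positive integer, and set e := n·e'. Assume e is not a perfect square and that the equation x² − e·y² = n has a solution in integers. Let (x₀, y₀) be the positive integer solution of x² − e·y² = n (with x₀ > 0 and y₀ > 0) for which x₀ is minimal. Then n divides x₀, n divides 2·x₀·y₀, and the pair ((x₀² + e·y₀²)/n, 2·x₀·y₀/n) is the fundamental solution of the Pell equation x² − e·y² = 1, i.e. it is the positive integer solution of x² − e·y² = 1 with minimal first coordinate. -/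
/-!
Since `n` is squarefree and divides `x₀² = n(1 + e'y₀²)`, it divides `x₀`; then `n` divides both
coordinates of `(x₀ + y₀√e)² = (x₀² + ey₀²) + 2x₀y₀√e`, whose norm is `n²`, so dividing by `n`
gives a solution `(A, B)` of the Pell equation. If a smaller positive Pell solution `(a, b)`
existed, multiplying `x₀ + y₀√e` by its conjugate `a - b√e` would produce a solution of
`x² - ey² = n` with `0 < x < x₀`, and `y ≠ 0` because a squarefree `n ≥ 2` is not a square.
-/

lemma pell_of_sq_div {e n x y : ℤ} (hn : n ≠ 0) (hxy : x ^ 2 - e * y ^ 2 = n)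
    (hA : n ∣ x ^ 2 + e * y ^ 2) (hB : n ∣ 2 * x * y) :
    ((x ^ 2 + e * y ^ 2) / n) ^ 2 - e * ((2 * x * y) / n) ^ 2 = 1 := by
  obtain ⟨A, hA⟩ := hA
  obtain ⟨B, hB⟩ := hB
  rw [hA, hB, Int.mul_ediv_cancel_left _ hn, Int.mul_ediv_cancel_left _ hn]
  have hn2 : n ^ 2 ≠ 0 := pow_ne_zero 2 hn
  refine mul_left_cancel₀ hn2 ?_
  linear_combination (-(x ^ 2 + e * y ^ 2) - n * A) * hA + e * (2 * x * y + n * B) * hB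
    + (x ^ 2 - e * y ^ 2 + n) * hxy

section Descent

variable {e n x y a b : ℤ}

lemma conj_mul_fst_pos (he : 0 < e) (hn : 0 ≤ n) (hx : 0 < x) (hy : 0 < y)
    (hxy : x ^ 2 - e * y ^ 2 = n) (ha : 0 < a) (hab : a ^ 2 - e * b ^ 2 = 1) :
    0 < x * a - e * y * b := by
  have hsq : (x * a) ^ 2 - (e * y * b) ^ 2 = n * a ^ 2 + e * y ^ 2 := by
    linear_combination a ^ 2 * hxy + e * y ^ 2 * hab
  have hpos : 0 < n * a ^ 2 + e * y ^ 2 := by positivity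
  have habs : |e * y * b| < x * a := abs_lt_of_sq_lt_sq (by linarith) (mul_pos hx ha).le
  linarith [le_abs_self (e * y * b)]

lemma conj_mul_fst_lt (he : 0 < e) (hy : 0 < y) (ha : 0 < a) (hb : 0 < b)
    (hab : a ^ 2 - e * b ^ 2 = 1) (hlt : (x ^ 2 - e * y ^ 2) * a < x ^ 2 + e * y ^ 2) :
    x * a - e * y * b < x := by
  have ha1 : 1 < a := by nlinarith [mul_pos he (mul_pos hb hb)]
  have hsq : (e * y * b) ^ 2 - (x * (a - 1)) ^ 2
      = (a - 1) * (x ^ 2 + e * y ^ 2 - (x ^ 2 - e * y ^ 2) * a) := by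
    linear_combination -e * y ^ 2 * hab
  have hpos : 0 < (a - 1) * (x ^ 2 + e * y ^ 2 - (x ^ 2 - e * y ^ 2) * a) :=
    mul_pos (by linarith) (by linarith)
  have habs : |x * (a - 1)| < e * y * b :=
    abs_lt_of_sq_lt_sq (by linarith) (mul_pos (mul_pos he hy) hb).le
  linarith [le_abs_self (x * (a - 1))]

lemma exists_smaller_solution (he : 0 < e) (hn : 0 ≤ n) (hnsq : ¬IsSquare n)
    (hx : 0 < x) (hy : 0 < y) (hxy : x ^ 2 - e * y ^ 2 = n)
    (ha : 0 < a) (hb : 0 < b) (hab : a ^ 2 - e * b ^ 2 = 1) (hlt : n * a < x ^ 2 + e * y ^ 2) :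
    ∃ x' y' : ℤ, 0 < x' ∧ 0 < y' ∧ x' ^ 2 - e * y' ^ 2 = n ∧ x' < x := by
  set x' := x * a - e * y * b
  set y' := y * a - x * b
  have hnorm : x' ^ 2 - e * y' ^ 2 = n := by
    linear_combination (a ^ 2 - e * b ^ 2) * hxy + n * hab
  have hy' : y' ≠ 0 := by
    intro h
    exact hnsq ⟨x', by rw [← hnorm, h]; ring⟩
  refine ⟨x', |y'|, conj_mul_fst_pos he hn hx hy hxy ha hab, abs_pos.mpr hy',
    by rwa [sq_abs], conj_mul_fst_lt he hy ha hb hab (by rwa [hxy])⟩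

end Descent

theorem minimal_solution_gives_fundamental_pell_general
    (n : ℤ) (hn : 2 ≤ n) (hnsf : Squarefree n)
    (e' : ℤ) (he' : 0 < e') (e : ℤ) (he : e = n * e')
    (x₀ y₀ : ℤ) (hx₀ : 0 < x₀) (hy₀ : 0 < y₀)
    (hsol : x₀ ^ 2 - e * y₀ ^ 2 = n)
    (hmin : ∀ x y : ℤ, 0 < x → 0 < y → x ^ 2 - e * y ^ 2 = n → x₀ ≤ x) :
    n ∣ x₀ ∧ n ∣ 2 * x₀ * y₀ ∧
      ((x₀ ^ 2 + e * y₀ ^ 2) / n) ^ 2 - e * ((2 * x₀ * y₀) / n) ^ 2 = 1 ∧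
      0 < (x₀ ^ 2 + e * y₀ ^ 2) / n ∧ 0 < (2 * x₀ * y₀) / n ∧
      ∀ a b : ℤ, 0 < a → 0 < b → a ^ 2 - e * b ^ 2 = 1 →
        (x₀ ^ 2 + e * y₀ ^ 2) / n ≤ a := by
  have hn0 : 0 < n := by linarith
  have he0 : 0 < e := he ▸ mul_pos hn0 he'
  have hnsq : ¬IsSquare n := fun ⟨r, hr⟩ => by
    have := Int.isUnit_mul_self (hnsf r ⟨1, by rw [hr, mul_one]⟩)
    omega
  have hdvd : n ∣ x₀ :=
    (hnsf.dvd_pow_iff_dvd two_ne_zero).mp ⟨1 + e' * y₀ ^ 2, by subst he; linear_combination hsol⟩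
  have hdA : n ∣ x₀ ^ 2 + e * y₀ ^ 2 := by
    rw [show x₀ ^ 2 + e * y₀ ^ 2 = 2 * x₀ ^ 2 - n by linear_combination -hsol]
    exact dvd_sub ((dvd_pow hdvd two_ne_zero).mul_left 2) dvd_rfl
  have hdB : n ∣ 2 * x₀ * y₀ := (hdvd.mul_left 2).mul_right y₀
  refine ⟨hdvd, hdB, pell_of_sq_div hn0.ne' hsol hdA hdB,
    Int.ediv_pos_of_pos_of_dvd (by positivity) hn0.le hdA,
    Int.ediv_pos_of_pos_of_dvd (by positivity) hn0.le hdB, fun a b ha hb hab => ?_⟩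
  by_contra! hlt
  rw [Int.lt_ediv_iff_mul_lt hn0 hdA, mul_comm] at hlt
  obtain ⟨x, y, hx, hy, hxy, hx_lt⟩ :=
    exists_smaller_solution he0 hn0.le hnsq hx₀ hy₀ hsol ha hb hab hlt
  exact (hmin x y hx hy hxy).not_gt hx_lt

/-- If `n ≥ 2` is squarefree, `e = n·e'` is not a perfect square, and `(x₀, y₀)` is the
minimal positive solution of `x² − e·y² = n`, then `n ∣ x₀`, `n ∣ 2x₀y₀`, and
`((x₀² + e·y₀²)/n, 2x₀y₀/n)` is the fundamental solution of the Pell equation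
`x² − e·y² = 1`. -/
theorem minimal_solution_gives_fundamental_pell
    (n : ℤ) (hn : 2 ≤ n) (hnsf : Squarefree n)
    (e' : ℤ) (he' : 0 < e') (e : ℤ) (he : e = n * e')
    (hensq : ¬ ∃ k : ℤ, e = k ^ 2)
    (x₀ y₀ : ℤ) (hx₀ : 0 < x₀) (hy₀ : 0 < y₀)
    (hsol : x₀ ^ 2 - e * y₀ ^ 2 = n)
    (hmin : ∀ x y : ℤ, 0 < x → 0 < y → x ^ 2 - e * y ^ 2 = n → x₀ ≤ x) :
    n ∣ x₀ ∧ n ∣ 2 * x₀ * y₀ ∧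
      ((x₀ ^ 2 + e * y₀ ^ 2) / n) ^ 2 - e * ((2 * x₀ * y₀) / n) ^ 2 = 1 ∧
      0 < (x₀ ^ 2 + e * y₀ ^ 2) / n ∧ 0 < (2 * x₀ * y₀) / n ∧
      ∀ a b : ℤ, 0 < a → 0 < b → a ^ 2 - e * b ^ 2 = 1 →
        (x₀ ^ 2 + e * y₀ ^ 2) / n ≤ a :=
  minimal_solution_gives_fundamental_pell_general n hn hnsf e' he' e he x₀ y₀ hx₀ hy₀ hsol hmin
end

section
/- Let n be a positive squarefree integer, let e' be a positive integer, and set e := n·e'. Assume that the equation x² − e·y² = n has a solution in integers. Then for every integer t, the equation x² − e·y² = t·n has a solution in integers if and only if the equation x² − e·y² = t has a solution in integers. -/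
/-!
Composing with a solution of `x² − e·y² = n` (multiplication by an element of norm `n` in
`ℤ[√e]`) carries solutions for `t` to solutions for `t·n`. Conversely, since `n` is squarefree
and divides `e`, every solution of `x² − e·y² = n·s` has `n ∣ x`; so for solutions of norms
`t·n` and `n`, both coordinates of the product of the first with the conjugate of the second
are divisible by `n`, and dividing them by `n` yields a solution for `t`.
-/

/-- Solvability of `𝒫_e(t)`. -/
def PellSolvable {R : Type*} [CommRing R] (e t : R) : Prop :=
  ∃ x y : R, x ^ 2 - e * y ^ 2 = t

namespace PellSolvable

variable {R : Type*} [CommRing R] {e s t : R}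

theorem mul (hs : PellSolvable e s) (ht : PellSolvable e t) : PellSolvable e (s * t) := by
  obtain ⟨x, y, rfl⟩ := hs
  obtain ⟨u, v, rfl⟩ := ht
  exact ⟨x * u + e * y * v, x * v + y * u, by ring⟩

theorem of_sq_mul [IsDomain R] {a b c : R} (hc : c ≠ 0) (ha : c ∣ a) (hb : c ∣ b)
    (h : a ^ 2 - e * b ^ 2 = c ^ 2 * t) : PellSolvable e t := by
  obtain ⟨a, rfl⟩ := ha
  obtain ⟨b, rfl⟩ := hb
  refine ⟨a, b, mul_left_cancel₀ (pow_ne_zero 2 hc) ?_⟩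
  rw [← h]
  ring

end PellSolvable

theorem Squarefree.dvd_of_dvd_sq_sub_mul_sq {R : Type*} [CommRing R] [DecompositionMonoid R]
    {n e x y : R} (hn : Squarefree n) (hne : n ∣ e) (h : n ∣ x ^ 2 - e * y ^ 2) : n ∣ x := by
  have hx : n ∣ x ^ 2 :=
    sub_add_cancel (x ^ 2) (e * y ^ 2) ▸ dvd_add h (dvd_mul_of_dvd_left hne _)
  exact (hn.dvd_pow_iff_dvd two_ne_zero).mp hx

theorem PellSolvable.of_mul_right {R : Type*} [CommRing R] [IsDomain R] [DecompositionMonoid R]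
    {n e t : R} (hn : Squarefree n) (hne : n ∣ e) (hsol : PellSolvable e n)
    (h : PellSolvable e (t * n)) : PellSolvable e t := by
  obtain ⟨u, v, huv⟩ := hsol
  obtain ⟨x, y, hxy⟩ := h
  have hnu : n ∣ u := hn.dvd_of_dvd_sq_sub_mul_sq hne (by rw [huv])
  have hnx : n ∣ x := hn.dvd_of_dvd_sq_sub_mul_sq hne (by rw [hxy]; exact dvd_mul_left n t)
  -- `(x + y√e)(u − v√e)`, of norm `(t·n)·n`
  refine PellSolvable.of_sq_mul (a := x * u - e * y * v) (b := y * u - x * v) hn.ne_zero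
    (dvd_sub (dvd_mul_of_dvd_left hnx u) (dvd_mul_of_dvd_left (dvd_mul_of_dvd_left hne y) v))
    (dvd_sub (dvd_mul_of_dvd_right hnu y) (dvd_mul_of_dvd_left hnx v)) ?_
  calc (x * u - e * y * v) ^ 2 - e * (y * u - x * v) ^ 2
      = (x ^ 2 - e * y ^ 2) * (u ^ 2 - e * v ^ 2) := by ring
    _ = n ^ 2 * t := by rw [hxy, huv]; ring

theorem pell_tn_solvable_iff_t_solvable_general
    (n : ℤ) (hnsf : Squarefree n)
    (e' : ℤ) (e : ℤ) (he : e = n * e')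
    (hsol : ∃ x y : ℤ, x ^ 2 - e * y ^ 2 = n) (t : ℤ) :
    (∃ x y : ℤ, x ^ 2 - e * y ^ 2 = t * n) ↔ (∃ x y : ℤ, x ^ 2 - e * y ^ 2 = t) :=
  ⟨PellSolvable.of_mul_right hnsf ⟨e', he⟩ hsol, fun h => PellSolvable.mul h hsol⟩

/-- If `n` is positive squarefree, `e = n·e'`, and `x² − e·y² = n` is solvable, then for
every integer `t`, the equation `x² − e·y² = t·n` is solvable iff `x² − e·y² = t` is. -/
theorem pell_tn_solvable_iff_t_solvable
    (n : ℤ) (hn : 0 < n) (hnsf : Squarefree n)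
    (e' : ℤ) (he' : 0 < e') (e : ℤ) (he : e = n * e')
    (hsol : ∃ x y : ℤ, x ^ 2 - e * y ^ 2 = n) (t : ℤ) :
    (∃ x y : ℤ, x ^ 2 - e * y ^ 2 = t * n) ↔ (∃ x y : ℤ, x ^ 2 - e * y ^ 2 = t) :=
  pell_tn_solvable_iff_t_solvable_general n hnsf e' e he hsol t
end

section
/- Let n be a positive squarefree integer with n ≡ 3 (mod 4), let e' be a positive integer, and set e := n·e'. Then the equations x² − e·y² = n and x² − e·y² = −n are not both solvable in integers. -/
/-!
Since `n` is squarefree, a solution of `x² − n e' y² = ±n` has `n ∣ x`, and dividing by `n` turns it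
into a solution of `n x₁² − e' y² = ±1`. Composing a solution for `+1` with one for `−1` produces an
integer `A` with `A² + 1 ≡ 0 (mod n)`, i.e. `−1` is a square modulo `n`; this is impossible because
`n ≡ 3 (mod 4)` has a prime factor `≡ 3 (mod 4)`.
-/

theorem Int.not_dvd_sq_add_one_of_emod_four_eq_three {n : ℤ} (hn : 0 < n) (hsf : Squarefree n)
    (h4 : n % 4 = 3) (a : ℤ) : ¬ n ∣ a ^ 2 + 1 := by
  intro hdvd
  have hsq : IsSquare (-1 : ZMod n.natAbs) := by
    refine ⟨(a : ZMod n.natAbs), ?_⟩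
    have hzero : ((a ^ 2 + 1 : ℤ) : ZMod n.natAbs) = 0 :=
      (ZMod.intCast_zmod_eq_zero_iff_dvd _ _).mpr (Int.natAbs_dvd.mpr hdvd)
    push_cast at hzero
    linear_combination -hzero
  have h4' : n.natAbs % 4 = 3 := by omega
  exact (ZMod.isSquare_neg_one_iff' (Int.squarefree_natAbs.mpr hsf)).mp hsq dvd_rfl h4'

theorem Squarefree.exists_mul_sq_sub_eq_of_sq_sub_eq_mul {n k x y t : ℤ} (hsf : Squarefree n)
    (h : x ^ 2 - n * k * y ^ 2 = n * t) : ∃ x₁, n * x₁ ^ 2 - k * y ^ 2 = t := by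
  have hdvd : n ∣ x := (hsf.dvd_pow_iff_dvd two_ne_zero).mp ⟨t + k * y ^ 2, by linear_combination h⟩
  obtain ⟨x₁, rfl⟩ := hdvd
  refine ⟨x₁, mul_left_cancel₀ hsf.ne_zero ?_⟩
  linear_combination h

/-- From `(n a c + k b d)² − n k (a d + b c)² = (n a² − k b²)(n c² − k d²)`. -/
theorem dvd_sq_add_one_of_mul_sq_sub_eq_one_of_eq_neg_one {R : Type*} [CommRing R]
    {n k a b c d : R} (h₁ : n * a ^ 2 - k * b ^ 2 = 1) (h₂ : n * c ^ 2 - k * d ^ 2 = -1) :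
    n ∣ (n * a * c + k * b * d) ^ 2 + 1 :=
  ⟨k * (a * d + b * c) ^ 2, by linear_combination (n * c ^ 2 - k * d ^ 2) * h₁ + h₂⟩

theorem pell_n_and_neg_n_not_both_solvable_general
    (n : ℤ) (hn : 0 < n) (hnsf : Squarefree n) (hn4 : n % 4 = 3)
    (e' : ℤ) (e : ℤ) (he : e = n * e') :
    ¬ ((∃ x y : ℤ, x ^ 2 - e * y ^ 2 = n) ∧ (∃ x y : ℤ, x ^ 2 - e * y ^ 2 = -n)) := by
  rintro ⟨⟨x, y, hpos⟩, u, v, hneg⟩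
  subst he
  obtain ⟨x₁, h₁⟩ := hnsf.exists_mul_sq_sub_eq_of_sq_sub_eq_mul (hpos.trans (mul_one n).symm)
  obtain ⟨u₁, h₂⟩ := hnsf.exists_mul_sq_sub_eq_of_sq_sub_eq_mul (hneg.trans (mul_neg_one n).symm)
  exact Int.not_dvd_sq_add_one_of_emod_four_eq_three hn hnsf hn4 _
    (dvd_sq_add_one_of_mul_sq_sub_eq_one_of_eq_neg_one h₁ h₂)

/-- For `n` positive squarefree with `n ≡ 3 (mod 4)` and `e = n·e'`, the equations
`x² − e·y² = n` and `x² − e·y² = −n` are not both solvable in integers. -/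
theorem pell_n_and_neg_n_not_both_solvable
    (n : ℤ) (hn : 0 < n) (hnsf : Squarefree n) (hn4 : n % 4 = 3)
    (e' : ℤ) (he' : 0 < e') (e : ℤ) (he : e = n * e') :
    ¬ ((∃ x y : ℤ, x ^ 2 - e * y ^ 2 = n) ∧ (∃ x y : ℤ, x ^ 2 - e * y ^ 2 = -n)) :=
  pell_n_and_neg_n_not_both_solvable_general n hn hnsf hn4 e' e he
end

section
/- Let n be a positive squarefree integer, let e' be a positive integer, and set e := n·e'. If the equation x² − e·y² = n has a solution in integers, then −e' is a square modulo n, i.e. there exists an integer z with z² ≡ −e' (mod n). Similarly, if x² − e·y² = −n has an integer solution, then e' is a square modulo n. -/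
/-! Since `n ∣ x²` and `n` is squarefree, `n ∣ x`; writing `x = n k` and dividing by `n` gives
`n k² − e' y² = s` for `s = ±1`, so `e' y² ≡ −s (mod n)` and multiplying by `e'` exhibits
`−s e'` as the square of `e' y` modulo `n`. -/

theorem Int.sq_modEq_neg_mul_of_sq_sub_eq_mul {n e' s x y : ℤ} (hn : Squarefree n)
    (h : x ^ 2 - n * e' * y ^ 2 = s * n) : (e' * y) ^ 2 ≡ -s * e' [ZMOD n] := by
  obtain ⟨k, rfl⟩ : n ∣ x :=
    (hn.dvd_pow_iff_dvd two_ne_zero).mp ⟨s + e' * y ^ 2, by linear_combination h⟩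
  have hk : n * k ^ 2 - e' * y ^ 2 = s :=
    mul_left_cancel₀ hn.ne_zero (by linear_combination h)
  exact Int.modEq_iff_dvd.mpr ⟨-e' * k ^ 2, by linear_combination e' * hk⟩

theorem pell_solvable_implies_square_mod_general
    (n : ℤ) (hnsf : Squarefree n)
    (e' : ℤ) (e : ℤ) (he : e = n * e') :
    ((∃ x y : ℤ, x ^ 2 - e * y ^ 2 = n) → ∃ z : ℤ, z ^ 2 ≡ -e' [ZMOD n]) ∧
    ((∃ x y : ℤ, x ^ 2 - e * y ^ 2 = -n) → ∃ z : ℤ, z ^ 2 ≡ e' [ZMOD n]) := by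
  subst he
  refine ⟨fun ⟨x, y, h⟩ => ⟨e' * y, ?_⟩, fun ⟨x, y, h⟩ => ⟨e' * y, ?_⟩⟩
  · simpa using
      Int.sq_modEq_neg_mul_of_sq_sub_eq_mul (s := 1) (x := x) hnsf (by linear_combination h)
  · simpa using
      Int.sq_modEq_neg_mul_of_sq_sub_eq_mul (s := -1) (x := x) hnsf (by linear_combination h)

/-- For `n` positive squarefree and `e = n·e'`: if `x² − e·y² = n` is solvable then `−e'`
is a square modulo `n`, and if `x² − e·y² = −n` is solvable then `e'` is a square
modulo `n`. -/
theorem pell_solvable_implies_square_mod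
    (n : ℤ) (hn : 0 < n) (hnsf : Squarefree n)
    (e' : ℤ) (he' : 0 < e') (e : ℤ) (he : e = n * e') :
    ((∃ x y : ℤ, x ^ 2 - e * y ^ 2 = n) → ∃ z : ℤ, z ^ 2 ≡ -e' [ZMOD n]) ∧
    ((∃ x y : ℤ, x ^ 2 - e * y ^ 2 = -n) → ∃ z : ℤ, z ^ 2 ≡ e' [ZMOD n]) :=
  pell_solvable_implies_square_mod_general n hnsf e' e he
end

section
/- Let n be a positive squarefree integer with n ≡ 3 (mod 4), let e' be a positive integer, and set e := n·e'. If both the equation x² − e·y² = n and the equation x² − 4e·y² = −5n are solvable in integers, then 5 does not divide e (equivalently, 5 divides neither n nor e'). -/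
/-! Since `n` is squarefree it divides `x` and `X`, and dividing by `n` leaves
`n x₁² - e' y² = 1` and `n X₁² - 4 e' Y² = -5`. Let `k = n` if `5 ∤ n` and `k = n / 5` otherwise
(then `5 ∣ Y`). Modulo `k` the two equations give `J(e' | k) = J(-1 | k) = -1` and
`J(e' | k) = J(5 | k)`, so `J(k | 5) = J(5 | k) = -1` by reciprocity. On the other hand `5 ∣ e`
makes `k` congruent to `±1` times a square modulo `5`, so `J(k | 5) = 1`. -/

lemma Int.prime_five : Prime (5 : ℤ) := by norm_num

lemma Squarefree.exists_mul_sq_sub_eq {n c r x : ℤ} (hn : Squarefree n)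
    (h : x ^ 2 - n * c = n * r) : ∃ x₁, n * x₁ ^ 2 - c = r := by
  obtain ⟨x₁, rfl⟩ : n ∣ x :=
    (hn.dvd_pow_iff_dvd two_ne_zero).mp ⟨c + r, by linear_combination h⟩
  exact ⟨x₁, mul_left_cancel₀ hn.ne_zero (by linear_combination h)⟩

lemma IsCoprime.of_dvd_mul_sq_sub {R : Type*} [CommRing R] {k a u y : R} (hu : IsCoprime u k)
    (h : k ∣ a * y ^ 2 - u) : IsCoprime y k := by
  obtain ⟨c, hc⟩ := h
  have : IsCoprime (a * y ^ 2) k := by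
    rw [show a * y ^ 2 = u + k * c by rw [← hc]; ring]
    exact hu.add_mul_left_left c
  exact this.of_mul_left_right.of_isCoprime_of_dvd_left (dvd_pow_self y two_ne_zero)

lemma jacobiSym_eq_of_dvd_mul_sq_sub {k : ℕ} {a b y : ℤ} (hy : IsCoprime y k)
    (h : (k : ℤ) ∣ a * y ^ 2 - b) : jacobiSym a k = jacobiSym b k :=
  calc jacobiSym a k = jacobiSym (a * y ^ 2) k := by
        rw [jacobiSym.mul_left, jacobiSym.sq_one' (Int.isCoprime_iff_gcd_eq_one.mp hy), mul_one]
    _ = jacobiSym b k := jacobiSym.mod_left' (Int.modEq_iff_dvd.mpr h).symm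

lemma jacobiSym_five_eq_one {k t : ℤ} (h : 5 ∣ k * t ^ 2 - 1 ∨ 5 ∣ k * t ^ 2 + 1) :
    jacobiSym k 5 = 1 := by
  rw [← sub_neg_eq_add] at h
  rcases h with h | h
  · rw [jacobiSym_eq_of_dvd_mul_sq_sub (isCoprime_one_left.of_dvd_mul_sq_sub h) h]
    norm_num
  · rw [jacobiSym_eq_of_dvd_mul_sq_sub (isCoprime_one_left.neg_left.of_dvd_mul_sq_sub h) h]
    norm_num

lemma jacobiSym_five_eq_neg_one {k : ℕ} (hk : k % 4 = 3) (h5 : ¬ 5 ∣ k) {a y Y : ℤ}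
    (h1 : (k : ℤ) ∣ a * y ^ 2 + 1) (h2 : (k : ℤ) ∣ a * (2 * Y) ^ 2 - 5) :
    jacobiSym k 5 = -1 := by
  rw [← sub_neg_eq_add] at h1
  have hy : IsCoprime y k := isCoprime_one_left.neg_left.of_dvd_mul_sq_sub h1
  have h5k : IsCoprime (5 : ℤ) k :=
    Int.prime_five.coprime_iff_not_dvd.mpr (by exact_mod_cast h5)
  have hY : IsCoprime (2 * Y) k := h5k.of_dvd_mul_sq_sub h2
  have hk_odd : Odd k := Nat.odd_iff.mpr (by omega)
  calc jacobiSym k 5 = jacobiSym 5 k :=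
        (jacobiSym.quadratic_reciprocity_one_mod_four (a := 5) (by norm_num) hk_odd).symm
    _ = jacobiSym a k := (jacobiSym_eq_of_dvd_mul_sq_sub hY h2).symm
    _ = jacobiSym (-1) k := jacobiSym_eq_of_dvd_mul_sq_sub hy h1
    _ = -1 := by rw [jacobiSym.at_neg_one hk_odd, ZMod.χ₄_nat_three_mod_four hk]

lemma not_five_dvd_of_pell_pair {k : ℕ} (hk : k % 4 = 3) (h5 : ¬ 5 ∣ k) {a x y X Y : ℤ}
    (h1 : k * x ^ 2 - a * y ^ 2 = 1) (h2 : k * X ^ 2 - 4 * a * Y ^ 2 = -5) : ¬ 5 ∣ a := by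
  rintro ⟨b, rfl⟩
  have hneg := jacobiSym_five_eq_neg_one hk h5 (a := 5 * b) (y := y) (Y := Y)
    ⟨x ^ 2, by linear_combination -h1⟩ ⟨X ^ 2, by linear_combination -h2⟩
  rw [jacobiSym_five_eq_one (t := x) (Or.inl ⟨b * y ^ 2, by linear_combination h1⟩)] at hneg
  norm_num at hneg

lemma not_pell_pair_five_mul {m : ℕ} (hm : m % 4 = 3) (h5 : ¬ 5 ∣ m) {a x y X Y : ℤ}
    (h1 : 5 * m * x ^ 2 - a * y ^ 2 = 1) (h2 : 5 * m * X ^ 2 - 4 * a * Y ^ 2 = -5) : False := by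
  have h5a : ¬ 5 ∣ a := by
    rintro ⟨b, rfl⟩
    have : (5 : ℤ) ∣ 1 := ⟨m * x ^ 2 - b * y ^ 2, by linear_combination -h1⟩
    norm_num at this
  obtain ⟨Y₁, rfl⟩ : 5 ∣ Y := by
    have h5aY : 5 ∣ 4 * a * Y ^ 2 := ⟨m * X ^ 2 + 1, by linear_combination -h2⟩
    rcases Int.prime_five.dvd_or_dvd h5aY with h | h
    · exact absurd (Int.prime_five.dvd_or_dvd h) (by omega)
    · exact Int.prime_five.dvd_of_dvd_pow h
  have hneg := jacobiSym_five_eq_neg_one hm h5 (a := a) (y := y) (Y := 5 * Y₁)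
    ⟨5 * x ^ 2, by linear_combination -h1⟩ ⟨5 * X ^ 2, by linear_combination -h2⟩
  rw [jacobiSym_five_eq_one (t := X) (Or.inr ⟨4 * a * Y₁ ^ 2, by linarith⟩)] at hneg
  norm_num at hneg

theorem five_not_dvd_e_of_both_pell_solvable_general
    (n : ℤ) (hn : 0 < n) (hnsf : Squarefree n) (hn4 : n % 4 = 3)
    (e' : ℤ) (e : ℤ) (he : e = n * e')
    (h1 : ∃ x y : ℤ, x ^ 2 - e * y ^ 2 = n)
    (h2 : ∃ x y : ℤ, x ^ 2 - 4 * e * y ^ 2 = -5 * n) :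
    ¬ (5 ∣ e) := by
  lift n to ℕ using hn.le
  subst he
  obtain ⟨x, y, hxy⟩ := h1
  obtain ⟨X, Y, hXY⟩ := h2
  obtain ⟨x₁, hx₁⟩ := hnsf.exists_mul_sq_sub_eq (x := x) (c := e' * y ^ 2) (r := 1)
    (by linear_combination hxy)
  obtain ⟨X₁, hX₁⟩ := hnsf.exists_mul_sq_sub_eq (x := X) (c := 4 * e' * Y ^ 2) (r := -5)
    (by linear_combination hXY)
  intro h5
  by_cases h5n : 5 ∣ n
  · obtain ⟨m, rfl⟩ := h5n
    have h5m : ¬ 5 ∣ m := fun h ↦ by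
      simpa using Int.squarefree_natCast.mp hnsf 5 (mul_dvd_mul_left 5 h)
    push_cast at hx₁ hX₁ hn4
    exact not_pell_pair_five_mul (by omega) h5m hx₁ hX₁
  · exact not_five_dvd_of_pell_pair (by omega) h5n hx₁ hX₁
      ((Int.prime_five.dvd_or_dvd h5).resolve_left (by exact_mod_cast h5n))

/-- If `n` is positive squarefree, `n ≡ 3 (mod 4)`, `e = n·e'`, and both `x² − e·y² = n`
and `x² − 4e·y² = −5n` are solvable in integers, then `5 ∤ e`. -/
theorem five_not_dvd_e_of_both_pell_solvable
    (n : ℤ) (hn : 0 < n) (hnsf : Squarefree n) (hn4 : n % 4 = 3)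
    (e' : ℤ) (he' : 0 < e') (e : ℤ) (he : e = n * e')
    (h1 : ∃ x y : ℤ, x ^ 2 - e * y ^ 2 = n)
    (h2 : ∃ x y : ℤ, x ^ 2 - 4 * e * y ^ 2 = -5 * n) :
    ¬ (5 ∣ e) :=
  five_not_dvd_e_of_both_pell_solvable_general n hn hnsf hn4 e' e he h1 h2
end

section
/- Let N be a positive integer and write N = 5^β · n'' with β ≥ 0 and n'' not divisible by 5. Then there exists an integer x with x² ≡ −N (mod 5N) if and only if β is even and n'' ≡ 1 (mod 5) or n'' ≡ −1 (mod 5). -/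
/-!
Write `N = p^β m` with `p ∤ m`. If `p N ∣ x² + N` and `β ≥ 1`, then `p ∣ x`, and writing
`x = p y` cancels `p²`, lowering `β` by two; at `β = 1` this gives `p² ∣ p m`, which is absurd.
So `β` is even and `-m` is a square mod `p`. Conversely, if `β = 2k` and `y² ≡ -m`, pick `u` with
`u y ≡ 1`; then `m u² ≡ -1` and `x = p^k m u` works, as `x² + N = p^{2k} m (m u² + 1)`.
For `p = 5` the nonzero squares are `±1`, and `-1` is one of them.
-/

namespace Prime

variable {p m x : ℤ}

theorem dvd_of_dvd_sq_add_mul (hp : Prime p) {n : ℤ} (h : p ∣ x ^ 2 + p * n) : p ∣ x :=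
  hp.dvd_of_dvd_pow <| (dvd_add_left (dvd_mul_right p n)).mp h

theorem not_sq_dvd_sq_add_mul (hp : Prime p) (hm : ¬ p ∣ m) : ¬ p ^ 2 ∣ x ^ 2 + p * m := by
  intro h
  obtain ⟨y, rfl⟩ := hp.dvd_of_dvd_sq_add_mul ((dvd_pow_self p two_ne_zero).trans h)
  have hpm : p * p ∣ p * m := pow_two p ▸ (dvd_add_right ⟨y ^ 2, by ring⟩).mp h
  exact hm ((mul_dvd_mul_iff_left hp.ne_zero).mp hpm)

theorem pow_add_three_dvd_sq_add_iff (hp : Prime p) (β : ℕ) (y : ℤ) :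
    p ^ (β + 3) ∣ (p * y) ^ 2 + p ^ (β + 2) * m ↔ p ^ (β + 1) ∣ y ^ 2 + p ^ β * m := by
  rw [show p ^ (β + 3) = p ^ 2 * p ^ (β + 1) by ring,
    show (p * y) ^ 2 + p ^ (β + 2) * m = p ^ 2 * (y ^ 2 + p ^ β * m) by ring]
  exact mul_dvd_mul_iff_left (pow_ne_zero 2 hp.ne_zero)

theorem even_and_exists_of_pow_succ_dvd (hp : Prime p) (hm : ¬ p ∣ m) :
    ∀ {β : ℕ} {x : ℤ}, p ^ (β + 1) ∣ x ^ 2 + p ^ β * m → Even β ∧ ∃ y, p ∣ y ^ 2 + m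
  | 0, x, h => ⟨Even.zero, x, by simpa using h⟩
  | 1, _, h => absurd (by simpa using h) (hp.not_sq_dvd_sq_add_mul hm)
  | β + 2, x, h => by
    have hx : p ∣ x ^ 2 + p * (p ^ (β + 1) * m) := by
      rw [← mul_assoc, ← pow_succ']
      exact (dvd_pow_self p (by omega)).trans h
    obtain ⟨y, rfl⟩ := hp.dvd_of_dvd_sq_add_mul hx
    obtain ⟨hβ, hy⟩ :=
      hp.even_and_exists_of_pow_succ_dvd hm ((hp.pow_add_three_dvd_sq_add_iff β y).mp h)
    exact ⟨hβ.add even_two, hy⟩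

theorem exists_dvd_mul_sq_add_one (hp : Prime p) (hm : ¬ p ∣ m) {y : ℤ} (hy : p ∣ y ^ 2 + m) :
    ∃ u, p ∣ m * u ^ 2 + 1 := by
  have hpy : ¬ p ∣ y := fun hdvd ↦ hm <| (dvd_add_right (dvd_pow hdvd two_ne_zero)).mp hy
  obtain ⟨u, v, huv⟩ := (hp.coprime_iff_not_dvd.mpr hpy).symm
  -- from `u y = 1 - v p`: `m u² + 1 = (y² + m) u² + p (2v - v²p)`
  refine ⟨u, (dvd_add (dvd_mul_of_dvd_left hy (u ^ 2)) (dvd_mul_right p (2 * v - v ^ 2 * p))).trans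
    (dvd_of_eq ?_)⟩
  linear_combination (u * y + 1 - v * p) * huv

theorem exists_sq_modEq_neg_pow_mul_iff (hp : Prime p) (hm : ¬ p ∣ m) (β : ℕ) :
    (∃ x, x ^ 2 ≡ -(p ^ β * m) [ZMOD p * (p ^ β * m)]) ↔ Even β ∧ ∃ y, y ^ 2 ≡ -m [ZMOD p] := by
  simp only [Int.modEq_iff_dvd, dvd_sub_comm (b := -_), sub_neg_eq_add]
  constructor
  · rintro ⟨x, hx⟩
    rw [← mul_assoc, ← pow_succ'] at hx
    exact hp.even_and_exists_of_pow_succ_dvd hm (dvd_of_mul_right_dvd hx)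
  · rintro ⟨⟨k, rfl⟩, y, hy⟩
    obtain ⟨u, hu⟩ := hp.exists_dvd_mul_sq_add_one hm hy
    refine ⟨p ^ k * m * u, ?_⟩
    convert mul_dvd_mul_left (p ^ (k + k) * m) hu using 1 <;> ring

end Prime

theorem ZMod.exists_sq_eq_neg_iff_of_ne_zero_five {a : ZMod 5} (ha : a ≠ 0) :
    (∃ b, b ^ 2 = -a) ↔ a = 1 ∨ a = -1 := by
  revert a; decide

theorem Int.exists_sq_modEq_neg_iff_five {m : ℤ} (hm : ¬ 5 ∣ m) :
    (∃ y, y ^ 2 ≡ -m [ZMOD 5]) ↔ m ≡ 1 [ZMOD 5] ∨ m ≡ -1 [ZMOD 5] := by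
  have hcast (a b : ℤ) : a ≡ b [ZMOD 5] ↔ (a : ZMod 5) = b :=
    (ZMod.intCast_eq_intCast_iff a b 5).symm
  have hm' : (m : ZMod 5) ≠ 0 := by rwa [Ne, ZMod.intCast_zmod_eq_zero_iff_dvd]
  simp only [hcast, Int.cast_pow, Int.cast_neg, Int.cast_one]
  exact ZMod.intCast_surjective.exists.symm.trans (ZMod.exists_sq_eq_neg_iff_of_ne_zero_five hm')

theorem square_neg_N_mod_5N_iff_general
    (N : ℤ) (β : ℕ) (n'' : ℤ) (h5 : ¬ ((5 : ℤ) ∣ n''))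
    (hfac : N = 5 ^ β * n'') :
    (∃ x : ℤ, x ^ 2 ≡ -N [ZMOD 5 * N]) ↔
      (Even β ∧ (n'' ≡ 1 [ZMOD 5] ∨ n'' ≡ -1 [ZMOD 5])) := by
  rw [hfac, (Int.prime_ofNat_iff.mpr Nat.prime_five).exists_sq_modEq_neg_pow_mul_iff h5,
    Int.exists_sq_modEq_neg_iff_five h5]

/-- Write `N = 5^β · n''` with `5 ∤ n''`. Then `x² ≡ −N (mod 5N)` is solvable iff `β` is
even and `n'' ≡ ±1 (mod 5)`. -/
theorem square_neg_N_mod_5N_iff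
    (N : ℤ) (hN : 0 < N) (β : ℕ) (n'' : ℤ) (h5 : ¬ ((5 : ℤ) ∣ n''))
    (hfac : N = 5 ^ β * n'') :
    (∃ x : ℤ, x ^ 2 ≡ -N [ZMOD 5 * N]) ↔
      (Even β ∧ (n'' ≡ 1 [ZMOD 5] ∨ n'' ≡ -1 [ZMOD 5])) :=
  square_neg_N_mod_5N_iff_general N β n'' h5 hfac
end

section
/- Let n and e' be positive integers with n ≡ 3 (mod 4). Set δ := gcd(n, e'), n' := n/δ, e'' := e'/δ, and e := n·e'. Let ε ∈ {1, −1} and let a, b be integers with a > 0, a² − n'·e''·b² = 1, 2δ dividing b, n dividing a − ε, and 2e' dividing a − ε. Then ε = 1 and there exist coprime integers r and s with r > 0, r² − e·s² = 1, a = 2e·s² + 1, and b = 2δ·r·s. -/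
/-! Writing `b = 2δc` turns the Pell equation into `a² - 4ec² = 1`, so `a = 2u + 1` with
`u(u + 1) = ec²`. The congruences say that `e` divides `u` (if `ε = 1`) or `u + 1` (if `ε = -1`);
the other factor is then coprime to `e`, hence, together with its cofactor in `c²`, a square.
For `ε = -1` this gives `u = r²` with `n ∣ r² + 1`, impossible because `-1` is not a square
modulo `n ≡ 3 (mod 4)`. For `ε = 1` it gives `u + 1 = r²` and `u = es²`. -/

open scoped NumberTheorySymbols

theorem Int.not_dvd_sq_add_one_of_emod_four_eq_three_s10 {n : ℤ} (hn : 0 < n) (hn4 : n % 4 = 3)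
    (x : ℤ) : ¬n ∣ x ^ 2 + 1 := by
  lift n to ℕ using hn.le
  have hn4 : n % 4 = 3 := by omega
  intro hdvd
  refine ZMod.nonsquare_of_jacobiSym_eq_neg_one (a := -1) (b := n) ?_ ⟨x, ?_⟩
  · rw [jacobiSym.at_neg_one (Nat.odd_iff.mpr (Nat.odd_of_mod_four_eq_three hn4)),
      ZMod.χ₄_nat_three_mod_four hn4]
  · have := (ZMod.intCast_zmod_eq_zero_iff_dvd _ n).mpr hdvd
    push_cast at this ⊢
    linear_combination -this

theorem Int.exists_eq_two_mul_add_one_of_sq_sub_four_mul_sq_eq_one {a e c : ℤ}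
    (h : a ^ 2 - 4 * e * c ^ 2 = 1) : ∃ u, a = 2 * u + 1 ∧ u * (u + 1) = e * c ^ 2 := by
  obtain ⟨u, rfl⟩ : Odd a := (Int.odd_pow' two_ne_zero).mp
    (show Odd (a ^ 2) from ⟨2 * e * c ^ 2, by linear_combination h⟩)
  exact ⟨u, rfl, mul_left_cancel₀ four_ne_zero (by linear_combination h)⟩

theorem Int.exists_eq_mul_of_mul_eq_mul_sq {x y e c : ℤ} (hxy : IsCoprime x y)
    (hxe : IsCoprime x e) (hx : x ≠ 0) (h : x * y = e * c ^ 2) :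
    ∃ w, y = e * w ∧ x * w = c ^ 2 ∧ IsCoprime x w := by
  obtain ⟨w, hw⟩ : x ∣ c ^ 2 := hxe.dvd_of_dvd_mul_left ⟨y, h.symm⟩
  have hy : y = e * w := mul_left_cancel₀ hx (by rw [h, hw]; ring)
  exact ⟨w, hy, hw.symm, hxy.of_isCoprime_of_dvd_right (Dvd.intro_left e hy.symm)⟩

theorem Int.exists_sq_of_isCoprime_of_mul_eq_sq {x w c : ℤ} (hx : 0 ≤ x)
    (hxw : IsCoprime x w) (h : x * w = c ^ 2) : ∃ r, 0 ≤ r ∧ x = r ^ 2 := by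
  obtain ⟨r, rfl | rfl⟩ := Int.sq_of_isCoprime hxw h
  · exact ⟨|r|, abs_nonneg r, (sq_abs r).symm⟩
  · exact ⟨0, le_rfl, by nlinarith [sq_nonneg r]⟩

theorem Int.exists_sq_sq_of_isCoprime_of_mul_eq_sq {x w c : ℤ} (hx : 0 < x)
    (hxw : IsCoprime x w) (h : x * w = c ^ 2) :
    ∃ r s, 0 < r ∧ IsCoprime r s ∧ x = r ^ 2 ∧ w = s ^ 2 ∧ c = r * s := by
  obtain ⟨r, hr, rfl⟩ := exists_sq_of_isCoprime_of_mul_eq_sq hx.le hxw h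
  have hw : 0 ≤ w := nonneg_of_mul_nonneg_right (h ▸ sq_nonneg c) hx
  obtain ⟨s, -, rfl⟩ := exists_sq_of_isCoprime_of_mul_eq_sq hw hxw.symm (by rw [mul_comm, h])
  have hr : 0 < r := lt_of_le_of_ne hr (by rintro rfl; simp at hx)
  have hrs : IsCoprime r s := (IsCoprime.pow_iff two_pos two_pos).mp hxw
  rcases sq_eq_sq_iff_eq_or_eq_neg.mp (show c ^ 2 = (r * s) ^ 2 by rw [← h]; ring) with hc | hc
  · exact ⟨r, s, hr, hrs, rfl, rfl, hc⟩
  · exact ⟨r, -s, hr, hrs.neg_right, rfl, by ring, by rw [hc]; ring⟩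

theorem rotation_extension_classification_general
    (n e' : ℤ) (hn : 0 < n) (hn4 : n % 4 = 3)
    (δ n' e'' e : ℤ)
    (hn' : n = δ * n') (he'' : e' = δ * e'') (he : e = n * e')
    (ε : ℤ) (hε : ε = 1 ∨ ε = -1)
    (a b : ℤ) (ha : 0 < a) (hpell : a ^ 2 - n' * e'' * b ^ 2 = 1)
    (hb : 2 * δ ∣ b) (h1 : n ∣ a - ε) (h2 : 2 * e' ∣ a - ε) :
    ε = 1 ∧ ∃ r s : ℤ, IsCoprime r s ∧ 0 < r ∧ r ^ 2 - e * s ^ 2 = 1 ∧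
      a = 2 * e * s ^ 2 + 1 ∧ b = 2 * δ * r * s := by
  obtain ⟨c, rfl⟩ := hb
  obtain ⟨u, rfl, hu⟩ := Int.exists_eq_two_mul_add_one_of_sq_sub_four_mul_sq_eq_one
    (a := a) (e := e) (c := c) (by rw [he, hn', he'']; linear_combination hpell)
  have hu0 : 0 ≤ u := by omega
  have hdvd (m : ℤ) (hm : 2 * u + 1 - ε = 2 * m) : n ∣ m ∧ e' ∣ m :=
    ⟨(Int.isCoprime_two_right.mpr (Int.odd_iff.mpr (by omega))).dvd_of_dvd_mul_right
      (by rw [mul_comm]; exact hm ▸ h1), (mul_dvd_mul_iff_left two_ne_zero).mp (hm ▸ h2)⟩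
  have hcop (x m : ℤ) (hxm : IsCoprime x m) (hm : 2 * u + 1 - ε = 2 * m) : IsCoprime x e :=
    he ▸ (hxm.of_isCoprime_of_dvd_right (hdvd m hm).1).mul_right
      (hxm.of_isCoprime_of_dvd_right (hdvd m hm).2)
  have hcons : IsCoprime (u + 1) u := ⟨1, -1, by ring⟩
  rcases hε with rfl | rfl
  · obtain ⟨w, hw, hcw, hcopw⟩ := Int.exists_eq_mul_of_mul_eq_mul_sq (e := e) (c := c)
      hcons (hcop _ u hcons (by ring)) (by omega) (by linear_combination hu)
    obtain ⟨r, s, hr, hrs, hr2, rfl, rfl⟩ :=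
      Int.exists_sq_sq_of_isCoprime_of_mul_eq_sq (by omega) hcopw hcw
    exact ⟨rfl, r, s, hrs, hr, by linear_combination hw - hr2, by rw [hw]; ring, by ring⟩
  · have hn1 : n ∣ u + 1 := (hdvd (u + 1) (by ring)).1
    have hu_ne : u ≠ 0 := by
      rintro rfl
      have := Int.le_of_dvd one_pos hn1
      omega
    obtain ⟨w, -, hcw, hcopw⟩ := Int.exists_eq_mul_of_mul_eq_mul_sq (e := e) (c := c)
      hcons.symm (hcop _ (u + 1) hcons.symm (by ring)) hu_ne hu
    obtain ⟨r, -, -, -, rfl, -, -⟩ :=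
      Int.exists_sq_sq_of_isCoprime_of_mul_eq_sq (by omega) hcopw hcw
    exact absurd hn1 (Int.not_dvd_sq_add_one_of_emod_four_eq_three_s10 hn hn4 r)

/-- Classification of the rotations of the Picard lattice `diag(2n, −2e')` extending to
the K3^[2] lattice: with `δ = gcd(n, e')`, `n = δn'`, `e' = δe''`, `e = ne'`, if `a > 0`,
`a² − n'e''·b² = 1`, `2δ ∣ b`, `n ∣ a − ε` and `2e' ∣ a − ε` with `ε = ±1`, then `ε = 1`
and there are coprime `r > 0`, `s` with `r² − e·s² = 1`, `a = 2e·s² + 1`, `b = 2δrs`. -/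
theorem rotation_extension_classification
    (n e' : ℤ) (hn : 0 < n) (he' : 0 < e') (hn4 : n % 4 = 3)
    (δ n' e'' e : ℤ) (hδ : δ = Int.gcd n e')
    (hn' : n = δ * n') (he'' : e' = δ * e'') (he : e = n * e')
    (ε : ℤ) (hε : ε = 1 ∨ ε = -1)
    (a b : ℤ) (ha : 0 < a) (hpell : a ^ 2 - n' * e'' * b ^ 2 = 1)
    (hb : 2 * δ ∣ b) (h1 : n ∣ a - ε) (h2 : 2 * e' ∣ a - ε) :
    ε = 1 ∧ ∃ r s : ℤ, IsCoprime r s ∧ 0 < r ∧ r ^ 2 - e * s ^ 2 = 1 ∧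
      a = 2 * e * s ^ 2 + 1 ∧ b = 2 * δ * r * s :=
  rotation_extension_classification_general n e' hn hn4 δ n' e'' e hn' he'' he ε hε a b ha hpell hb
    h1 h2
end

section
/- Let n and e' be positive integers with n ≡ 3 (mod 4) and gcd(n, e') = 1, and set e := n·e'. Let ε ∈ {1, −1} and let a, b be integers with a > 0, a² − e·b² = 1, b even, n dividing a − ε, and 2e' dividing a + ε. Then there exist coprime integers r and s with r ≥ 0, b = 2·r·s, a = 2e'·s² − ε, and n·r² − e'·s² = −ε. In particular, one of the two equations x² − e·y² = n and x² − e·y² = −n is solvable in integers. -/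
/-!
Write `b = 2c`. As `a` and `n` are odd, `n ∣ a - ε` improves to `a - ε = 2nA`; write also
`a + ε = 2e'v`. Multiplying, `a² - 1 = 4ne'·Av`, so the Pell equation says `Av = c²`;
subtracting, `e'v - nA = ε`, so `A` and `v` are coprime. Both are nonnegative since `a > 0`,
hence `A = r²`, `v = s²` with `c = rs` after choosing the sign of `s`. Then `nr² - e's² = -ε`,
and `(nr, s)` solves `x² - e·y² = -εn`.
-/

namespace Int

theorem exists_sq_eq_of_isCoprime_of_mul_eq_sq {A B c : ℤ} (hAB : IsCoprime A B) (hA : 0 ≤ A)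
    (h : A * B = c ^ 2) : ∃ r, A = r ^ 2 := by
  obtain ⟨r, hr | hr⟩ := sq_of_isCoprime hAB h
  · exact ⟨r, hr⟩
  · exact ⟨r, by nlinarith [sq_nonneg r]⟩

theorem exists_sq_eq_sq_eq_of_isCoprime_of_mul_eq_sq {A B c : ℤ} (hAB : IsCoprime A B)
    (hA : 0 ≤ A) (hB : 0 ≤ B) (h : A * B = c ^ 2) :
    ∃ r s, IsCoprime r s ∧ 0 ≤ r ∧ A = r ^ 2 ∧ B = s ^ 2 ∧ c = r * s := by
  obtain ⟨r, rfl⟩ := exists_sq_eq_of_isCoprime_of_mul_eq_sq hAB hA h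
  obtain ⟨s, rfl⟩ := exists_sq_eq_of_isCoprime_of_mul_eq_sq hAB.symm hB (by rw [mul_comm, h])
  rw [← sq_abs r] at hAB h ⊢
  have hrs : IsCoprime |r| s := (IsCoprime.pow_iff two_pos two_pos).mp hAB
  have hc : (c - |r| * s) * (c + |r| * s) = 0 := by linear_combination -h
  rcases mul_eq_zero.mp hc with hc | hc
  · exact ⟨|r|, s, hrs, abs_nonneg r, rfl, rfl, by linarith⟩
  · exact ⟨|r|, -s, hrs.neg_right, abs_nonneg r, rfl, by ring, by linarith⟩

theorem odd_of_sq_sub_mul_sq_eq_one {a b d : ℤ} (hb : Even b) (h : a ^ 2 - d * b ^ 2 = 1) :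
    Odd a := by
  obtain ⟨c, rfl⟩ := hb
  exact (odd_pow' two_ne_zero).mp ⟨2 * d * c ^ 2, by linear_combination h⟩

theorem mul_eq_sq_of_sq_sub_mul_sq_eq_one {n e' ε a c A v : ℤ} (hne : n * e' ≠ 0)
    (hε : ε ^ 2 = 1) (hpell : a ^ 2 - n * e' * (2 * c) ^ 2 = 1) (hA : a - ε = 2 * n * A)
    (hv : a + ε = 2 * e' * v) : A * v = c ^ 2 := by
  have h4 : (4 * (n * e') : ℤ) ≠ 0 := mul_ne_zero four_ne_zero hne
  apply mul_left_cancel₀ h4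
  linear_combination (-(a + ε)) * hA - 2 * n * A * hv + hpell - hε

end Int

theorem reflection_extension_classification_general
    (n e' : ℤ) (hn : 0 < n) (he' : 0 < e') (hn4 : n % 4 = 3)
    (e : ℤ) (he : e = n * e')
    (ε : ℤ) (hε : ε = 1 ∨ ε = -1)
    (a b : ℤ) (ha : 0 < a) (hpell : a ^ 2 - e * b ^ 2 = 1) (hb : Even b)
    (h1 : n ∣ a - ε) (h2 : 2 * e' ∣ a + ε) :
    (∃ r s : ℤ, IsCoprime r s ∧ 0 ≤ r ∧ b = 2 * r * s ∧
        a = 2 * e' * s ^ 2 - ε ∧ n * r ^ 2 - e' * s ^ 2 = -ε) ∧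
    ((∃ x y : ℤ, x ^ 2 - e * y ^ 2 = n) ∨ (∃ x y : ℤ, x ^ 2 - e * y ^ 2 = -n)) := by
  subst he
  have hε2 : ε ^ 2 = 1 := Int.isUnit_sq (Int.isUnit_iff.mpr hε)
  have hεodd : Odd ε := by rcases hε with rfl | rfl <;> decide
  have hsub : 2 ∣ a - ε := even_iff_two_dvd.mp <|
    Int.even_sub'.mpr (iff_of_true (Int.odd_of_sq_sub_mul_sq_eq_one hb hpell) hεodd)
  obtain ⟨A, hA⟩ := (Int.isCoprime_two_left.mpr (Int.odd_iff.mpr (by omega))).mul_dvd hsub h1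
  obtain ⟨v, hv⟩ := h2
  obtain ⟨c, rfl⟩ := even_iff_two_dvd.mp hb
  have hAv := Int.mul_eq_sq_of_sq_sub_mul_sq_eq_one (by positivity) hε2 hpell hA hv
  have hlink : e' * v - n * A = ε := by linarith
  have hcop : IsCoprime A v := ⟨-(ε * n), ε * e', by linear_combination ε * hlink + hε2⟩
  have hA0 : 0 ≤ A :=
    nonneg_of_mul_nonneg_right (by rcases hε with rfl | rfl <;> omega) (by omega : 0 < 2 * n)
  have hv0 : 0 ≤ v :=
    nonneg_of_mul_nonneg_right (by rcases hε with rfl | rfl <;> omega) (by omega : 0 < 2 * e')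
  obtain ⟨r, s, hrs, hr0, rfl, rfl, rfl⟩ :=
    Int.exists_sq_eq_sq_eq_of_isCoprime_of_mul_eq_sq hcop hA0 hv0 hAv
  have hnorm : n * r ^ 2 - e' * s ^ 2 = -ε := by linarith
  refine ⟨⟨r, s, hrs, hr0, by ring, by linarith, hnorm⟩, ?_⟩
  rcases hε with rfl | rfl
  · exact .inr ⟨n * r, s, by linear_combination n * hnorm⟩
  · exact .inl ⟨n * r, s, by linear_combination n * hnorm⟩

/-- Classification of the reflections of the Picard lattice `diag(2n, −2e')` extending to
the K3^[2] lattice when `gcd(n, e') = 1`: if `a > 0`, `a² − e·b² = 1` with `b` even,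
`n ∣ a − ε` and `2e' ∣ a + ε` with `ε = ±1`, then there are coprime `r ≥ 0`, `s` with
`b = 2rs`, `a = 2e'·s² − ε`, `n·r² − e'·s² = −ε`; in particular one of the equations
`x² − e·y² = ±n` is solvable. -/
theorem reflection_extension_classification
    (n e' : ℤ) (hn : 0 < n) (he' : 0 < e') (hn4 : n % 4 = 3)
    (hcop : IsCoprime n e') (e : ℤ) (he : e = n * e')
    (ε : ℤ) (hε : ε = 1 ∨ ε = -1)
    (a b : ℤ) (ha : 0 < a) (hpell : a ^ 2 - e * b ^ 2 = 1) (hb : Even b)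
    (h1 : n ∣ a - ε) (h2 : 2 * e' ∣ a + ε) :
    (∃ r s : ℤ, IsCoprime r s ∧ 0 ≤ r ∧ b = 2 * r * s ∧
        a = 2 * e' * s ^ 2 - ε ∧ n * r ^ 2 - e' * s ^ 2 = -ε) ∧
    ((∃ x y : ℤ, x ^ 2 - e * y ^ 2 = n) ∨ (∃ x y : ℤ, x ^ 2 - e * y ^ 2 = -n)) :=
  reflection_extension_classification_general n e' hn he' hn4 e he ε hε a b ha hpell hb h1 h2
end

section
/- Let n and e' be positive integers, set δ := gcd(n, e'), n' := n/δ, and e'' := e'/δ. A 2×2 integer matrix M satisfies Mᵀ·G·M = G, where G is the diagonal matrix with entries 2n and −2e', if and only if there exist integers a, b and α ∈ {1, −1} with a² − n'·e''·b² = 1 such that M has first row (a, α·e''·b) and second row (n'·b, α·a); here α is the determinant of M. -/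
/-!
The Gram matrix is `2δ · diag(n', -e'')`, and the scalar `2δ` cancels from `Mᵀ G M = G`.
Taking determinants gives `(det M)² = 1`. For `M = !![p, q; r, s]` the entries of `Mᵀ G M = G`
then force `s = (det M) p` and `n' (det M) q = e'' r`; since `n'` and `e''` are coprime, `n'`
divides `r`, and writing `r = n' b` the remaining entries and the Pell equation `a² - n'e''b² = 1`
follow by cancelling `n'`.
-/

open Matrix

namespace Matrix

variable {R : Type*} [CommRing R]

theorem transpose_mul_smul_mul_eq_smul_iff [IsDomain R] {m : Type*} [Fintype m] {c : R}
    (hc : c ≠ 0) (G M : Matrix m m R) : Mᵀ * (c • G) * M = c • G ↔ Mᵀ * G * M = G := by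
  rw [Matrix.mul_smul, Matrix.smul_mul, smul_right_inj hc]

theorem sq_det_eq_one_of_transpose_mul_mul_eq [IsDomain R] {m : Type*} [Fintype m]
    [DecidableEq m] {G M : Matrix m m R} (hG : G.det ≠ 0) (h : Mᵀ * G * M = G) :
    M.det ^ 2 = 1 := by
  have hdet := congrArg det h
  rw [det_mul, det_mul, det_transpose] at hdet
  exact mul_left_cancel₀ hG (by linear_combination hdet)

theorem transpose_mul_diagonal_mul_fin_two (p q r s u v : R) :
    !![p, q; r, s]ᵀ * !![u, 0; 0, v] * !![p, q; r, s] =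
      !![u * p ^ 2 + v * r ^ 2, u * p * q + v * r * s;
        u * p * q + v * r * s, u * q ^ 2 + v * s ^ 2] := by
  ext i j
  fin_cases i <;> fin_cases j <;> simp [mul_apply, Fin.sum_univ_two] <;> ring

end Matrix

section DiagonalForm

variable {R : Type*} [CommRing R] {u v : R}

theorem transpose_mul_diagonal_mul_eq_of_pell {a b α : R} (hα : α ^ 2 = 1)
    (hab : a ^ 2 - u * v * b ^ 2 = 1) :
    !![a, α * v * b; u * b, α * a]ᵀ * !![u, 0; 0, -v] * !![a, α * v * b; u * b, α * a] =
      !![u, 0; 0, -v] := by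
  rw [transpose_mul_diagonal_mul_fin_two]
  simp only [EmbeddingLike.apply_eq_iff_eq, vecCons_inj, and_true]
  refine ⟨⟨?_, ?_⟩, ?_, ?_⟩
  · linear_combination u * hab
  · ring
  · ring
  · linear_combination (-v * α ^ 2) * hab - v * hα

variable [IsDomain R]

theorem exists_pell_of_transpose_mul_diagonal_mul_eq (hu : u ≠ 0) (huv : IsCoprime u v)
    {M : Matrix (Fin 2) (Fin 2) R} (hdet : M.det ^ 2 = 1)
    (h : Mᵀ * !![u, 0; 0, -v] * M = !![u, 0; 0, -v]) :
    ∃ a b : R, a ^ 2 - u * v * b ^ 2 = 1 ∧ M = !![a, M.det * v * b; u * b, M.det * a] := by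
  obtain ⟨p, q, r, s, rfl⟩ : ∃ p q r s, M = !![p, q; r, s] := ⟨_, _, _, _, eta_fin_two M⟩
  rw [transpose_mul_diagonal_mul_fin_two] at h
  simp only [EmbeddingLike.apply_eq_iff_eq, vecCons_inj, and_true] at h
  obtain ⟨⟨h₁, h₂⟩, -, h₃⟩ := h
  rw [det_fin_two_of] at hdet ⊢
  set α := p * s - q * r
  have hs : s = α * p := mul_left_cancel₀ hu (by linear_combination -s * h₁ + r * h₂)
  have hαq : u * (α * q) = v * r := by linear_combination s * h₂ - r * h₃
  obtain ⟨b, rfl⟩ : u ∣ r := huv.dvd_of_dvd_mul_left (Dvd.intro _ hαq)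
  have hq : q = α * v * b := by
    have : α * q = v * b := mul_left_cancel₀ hu (by linear_combination hαq)
    linear_combination α * this - q * hdet
  refine ⟨p, b, mul_left_cancel₀ hu (by linear_combination h₁), ?_⟩
  rw [← hq, ← hs]

theorem transpose_mul_diagonal_mul_eq_iff (hu : u ≠ 0) (hv : v ≠ 0) (huv : IsCoprime u v)
    (M : Matrix (Fin 2) (Fin 2) R) :
    Mᵀ * !![u, 0; 0, -v] * M = !![u, 0; 0, -v] ↔
      ∃ a b α : R, (α = 1 ∨ α = -1) ∧ a ^ 2 - u * v * b ^ 2 = 1 ∧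
        M = !![a, α * v * b; u * b, α * a] ∧ M.det = α := by
  constructor
  · intro h
    have hdet : M.det ^ 2 = 1 :=
      sq_det_eq_one_of_transpose_mul_mul_eq (by simpa [det_fin_two_of] using ⟨hu, hv⟩) h
    obtain ⟨a, b, hab, hM⟩ := exists_pell_of_transpose_mul_diagonal_mul_eq hu huv hdet h
    exact ⟨a, b, M.det, sq_eq_one_iff.mp hdet, hab, hM, rfl⟩
  · rintro ⟨a, b, α, hα, hab, rfl, -⟩
    exact transpose_mul_diagonal_mul_eq_of_pell (sq_eq_one_iff.mpr hα) hab

end DiagonalForm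

theorem Int.isCoprime_of_gcd_mul_left_eq {δ a b : ℤ} (hδ : 0 < δ)
    (h : δ = Int.gcd (δ * a) (δ * b)) :
    IsCoprime a b := by
  rw [Int.gcd_mul_left, Nat.cast_mul, Int.natAbs_of_nonneg hδ.le] at h
  rw [Int.isCoprime_iff_gcd_eq_one]
  exact_mod_cast (mul_right_eq_self₀.mp h.symm).resolve_right hδ.ne'

/-- Description of the orthogonal group of the rank-2 lattice with Gram matrix
`diag(2n, −2e')`: with `δ = gcd(n, e')`, `n = δn'`, `e' = δe''`, an integer matrix `M`
satisfies `Mᵀ G M = G` iff `M = !![a, α·e''·b; n'·b, α·a]` for some integers `a`, `b` and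
`α = ±1` with `a² − n'e''·b² = 1`; moreover `α = det M`. -/
theorem orthogonal_group_rank_two_lattice
    (n e' : ℤ) (hn : 0 < n) (he' : 0 < e')
    (δ n' e'' : ℤ) (hδ : δ = Int.gcd n e') (hn' : n = δ * n') (he'' : e' = δ * e'')
    (M : Matrix (Fin 2) (Fin 2) ℤ) :
    (Mᵀ * !![2 * n, 0; 0, -2 * e'] * M = !![2 * n, 0; 0, -2 * e']) ↔
      ∃ a b α : ℤ, (α = 1 ∨ α = -1) ∧ a ^ 2 - n' * e'' * b ^ 2 = 1 ∧
        M = !![a, α * e'' * b; n' * b, α * a] ∧ M.det = α := by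
  have hδ0 : 0 < δ := hδ ▸ mod_cast Int.gcd_pos_of_ne_zero_left e' hn.ne'
  subst hn' he''
  have hG : !![2 * (δ * n'), 0; 0, -2 * (δ * e'')] = (2 * δ) • !![n', 0; 0, -e''] := by
    simp only [smul_of, smul_cons, smul_eq_mul, smul_empty]
    ring_nf
  rw [hG, transpose_mul_smul_mul_eq_smul_iff (by positivity),
    transpose_mul_diagonal_mul_eq_iff (right_ne_zero_of_mul hn.ne') (right_ne_zero_of_mul he'.ne')
      (Int.isCoprime_of_gcd_mul_left_eq hδ0 hδ)]
end

section
/- Let n and m be positive integers with (n, m) ≠ (1, 2) and set e := m² + n. Then every pair of positive integers (a, b) with a² − 4e·b² = 5 satisfies m·a < 2e·b. -/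
/-!
By the Pell equation, `(2eb)² − (ma)² = 4enb² − 5m²`, and `4enb² ≥ 8e > 5m²` as soon as
`nb² ≥ 2`. The remaining case `n = b = 1` gives `a² = 4m² + 9`, i.e. `(a − 2m)(a + 2m) = 9`,
whose only solutions have `m = 0` or `|m| = 2`.
-/

theorem sq_sub_sq_eq_of_pell {n m e a b : ℤ} (he : e = m ^ 2 + n)
    (hp : a ^ 2 - 4 * e * b ^ 2 = 5) :
    (2 * e * b) ^ 2 - (m * a) ^ 2 = 4 * e * n * b ^ 2 - 5 * m ^ 2 := by
  subst he
  linear_combination (-m ^ 2) * hp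

theorem eq_zero_or_abs_eq_two_of_sq_eq {a m : ℤ} (h : a ^ 2 = 4 * m ^ 2 + 9) :
    m = 0 ∨ |m| = 2 := by
  obtain ⟨x, hx0, hx⟩ : ∃ x : ℤ, 0 ≤ x ∧ x ^ 2 = 4 * |m| ^ 2 + 9 :=
    ⟨|a|, abs_nonneg a, by rwa [sq_abs, sq_abs]⟩
  have hm0 := abs_nonneg m
  have hx_gt : 2 * |m| + 1 ≤ x := by nlinarith
  have hm_le : |m| ≤ 2 := by nlinarith
  rw [← abs_eq_zero]
  interval_cases |m|
  · exact Or.inl rfl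
  · have hx_lt : x < 4 := by nlinarith
    interval_cases x
    norm_num at hx
  · exact Or.inr rfl

theorem five_mul_sq_lt_of_pell {n m a b : ℤ} (hn : 0 < n) (hm : 0 < m)
    (hne : ¬ (n = 1 ∧ m = 2)) (hb : 0 < b) (hp : a ^ 2 - 4 * (m ^ 2 + n) * b ^ 2 = 5) :
    5 * m ^ 2 < 4 * (m ^ 2 + n) * n * b ^ 2 := by
  have hnb : 0 < n * b ^ 2 := by positivity
  rcases (show n * b ^ 2 = 1 ∨ 2 ≤ n * b ^ 2 by omega) with hnb1 | hnb2
  · have hn1 : n = 1 := Int.eq_one_of_mul_eq_one_right hn.le hnb1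
    subst hn1
    rw [one_mul] at hnb1
    rw [hnb1] at hp
    rcases eq_zero_or_abs_eq_two_of_sq_eq (a := a) (m := m) (by linarith) with hm0 | hm2
    · omega
    · rw [abs_of_pos hm] at hm2
      exact absurd ⟨rfl, hm2⟩ hne
  · nlinarith [sq_nonneg m]

theorem slope_bound_pell_five_general
    (n m : ℤ) (hn : 0 < n) (hm : 0 < m) (hne : ¬ (n = 1 ∧ m = 2))
    (e : ℤ) (he : e = m ^ 2 + n)
    (a b : ℤ) (hb : 0 < b) (hp : a ^ 2 - 4 * e * b ^ 2 = 5) :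
    m * a < 2 * e * b := by
  have hkey : 5 * m ^ 2 < 4 * e * n * b ^ 2 := by
    rw [he] at hp ⊢
    exact five_mul_sq_lt_of_pell hn hm hne hb hp
  have hsq : (m * a) ^ 2 < (2 * e * b) ^ 2 := by
    linarith [sq_sub_sq_eq_of_pell he hp]
  have he0 : 0 < e := by rw [he]; positivity
  exact lt_of_abs_lt (abs_lt_of_sq_lt_sq hsq (by positivity))

/-- For `e = m² + n` with `n, m > 0` and `(n, m) ≠ (1, 2)`, every positive solution
`(a, b)` of `a² − 4e·b² = 5` satisfies `m·a < 2e·b`. -/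
theorem slope_bound_pell_five
    (n m : ℤ) (hn : 0 < n) (hm : 0 < m) (hne : ¬ (n = 1 ∧ m = 2))
    (e : ℤ) (he : e = m ^ 2 + n)
    (a b : ℤ) (ha : 0 < a) (hb : 0 < b) (hp : a ^ 2 - 4 * e * b ^ 2 = 5) :
    m * a < 2 * e * b :=
  slope_bound_pell_five_general n m hn hm hne e he a b hb hp
end

section
/- Let n be a positive integer with n ≡ 3 (mod 4), let m be a nonnegative integer, and set e := m² + m + (n+1)/4. Then every pair of positive integers (a, b) with a² − 4e·b² = 5 satisfies (2m+1)·a < 4e·b. -/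
/-!
Write `x = 2m + 1` and `c = 4k - 1` with `k = (n + 1)/4 ≥ 1`, so that `4e = x² + c`.
Since `a² = 4e·b² + 5`, we get `(4e·b)² - (x·a)² = 4e·b²·c - 5x²`, which is positive as
soon as `c·b² ≥ 5`; this covers `b ≥ 2`. For `b = 1` we have `a² = x² + 4(k + 1)`, so `a` is
odd and exceeds the odd number `x`, hence `a ≥ x + 2` and `a² - x·a ≥ 2a ≥ 6 > 5`.
-/

lemma mul_lt_mul_of_sq_sub_mul_sq_eq {x c a b t : ℤ} (hc : 0 < c) (hb : 0 < b) (ht : 0 < t)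
    (htc : t ≤ c * b ^ 2) (hp : a ^ 2 - (x ^ 2 + c) * b ^ 2 = t) :
    x * a < (x ^ 2 + c) * b := by
  have hdiff : ((x ^ 2 + c) * b) ^ 2 - (x * a) ^ 2 = (x ^ 2 + c) * (c * b ^ 2) - t * x ^ 2 := by
    linear_combination (-x ^ 2) * hp
  have hlt : t * x ^ 2 < (x ^ 2 + c) * (c * b ^ 2) :=
    calc t * x ^ 2 < t * (x ^ 2 + c) := by gcongr; linarith
      _ ≤ c * b ^ 2 * (x ^ 2 + c) := by gcongr
      _ = (x ^ 2 + c) * (c * b ^ 2) := by ring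
  exact lt_of_pow_lt_pow_left₀ 2 (by positivity) (by linarith)

lemma add_two_le_of_sq_eq_sq_add_four_mul {x a j : ℤ} (hx : Odd x) (hx₀ : 0 ≤ x) (ha : 0 < a)
    (hj : 0 < j) (h : a ^ 2 = x ^ 2 + 4 * j) : x + 2 ≤ a := by
  have ha_odd : Odd a := by
    have : Odd (a ^ 2) := h ▸ hx.pow.add_even ⟨2 * j, by ring⟩
    exact (Int.odd_pow' two_ne_zero).mp this
  have hxa : x < a := by nlinarith
  obtain ⟨r, hr⟩ := ha_odd.sub_odd hx
  omega

/-- For `n ≡ 3 (mod 4)` positive, `m ≥ 0`, and `e = m² + m + (n+1)/4`, every positive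
solution `(a, b)` of `a² − 4e·b² = 5` satisfies `(2m+1)·a < 4e·b`. -/
theorem slope_bound_pell_five_divisibility_two
    (n m : ℤ) (hn : 0 < n) (hn4 : n % 4 = 3) (hm : 0 ≤ m)
    (e : ℤ) (he : e = m ^ 2 + m + (n + 1) / 4)
    (a b : ℤ) (ha : 0 < a) (hb : 0 < b) (hp : a ^ 2 - 4 * e * b ^ 2 = 5) :
    (2 * m + 1) * a < 4 * e * b := by
  set k := (n + 1) / 4
  have hk : 1 ≤ k := by omega
  have h4e : 4 * e = (2 * m + 1) ^ 2 + (4 * k - 1) := by rw [he]; ring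
  rw [h4e] at hp ⊢
  obtain rfl | hb₂ : b = 1 ∨ 2 ≤ b := by omega
  · have ha_ge : 2 * m + 1 + 2 ≤ a :=
      add_two_le_of_sq_eq_sq_add_four_mul (odd_two_mul_add_one m) (by omega) ha
        (j := k + 1) (by omega) (by linear_combination hp)
    nlinarith
  · exact mul_lt_mul_of_sq_sub_mul_sq_eq (by omega) hb (by norm_num) (by nlinarith) hp
end

section
/- Let n be a positive integer, let a, b, c, m be integers not all zero, and set s := gcd(2n·a, 2b, c) (a positive integer). Let e be an integer with e·s² = 4n·(n·a² + b² + m·c²). Then s divides 2n·a and 2b, and: if s divides b, then e ≡ (2n·a/s)² (mod 4n); if s does not divide b, then e ≡ (2n·a/s)² + n (mod 4n). In particular, e or e − n is a square modulo 4n. -/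
/-!
Clearing the common factor `s` from `2na`, `2b` and `c` turns the defining equation into
`e = A² + n·B² + 4nm·C²` with `A = 2na/s`, `B = 2b/s`, `C = c/s`. Modulo `4n` the last term
vanishes and `n·B²` is `0` or `n` according to the parity of `B`, and `B` is even exactly
when `s ∣ b`.
-/

namespace Int

theorem eq_ediv_sq_add_of_mul_sq_eq {e s x y z n k : ℤ} (hs : s ≠ 0)
    (hx : s ∣ x) (hy : s ∣ y) (hz : s ∣ z)
    (he : e * s ^ 2 = x ^ 2 + n * y ^ 2 + k * z ^ 2) :
    e = (x / s) ^ 2 + n * (y / s) ^ 2 + k * (z / s) ^ 2 := by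
  obtain ⟨X, rfl⟩ := hx
  obtain ⟨Y, rfl⟩ := hy
  obtain ⟨Z, rfl⟩ := hz
  simp only [Int.mul_ediv_cancel_left _ hs]
  apply mul_right_cancel₀ (pow_ne_zero 2 hs)
  linear_combination he

theorem dvd_iff_even_two_mul_ediv {s b : ℤ} (hs : s ≠ 0) (h : s ∣ 2 * b) :
    s ∣ b ↔ Even (2 * b / s) := by
  constructor
  · rintro ⟨k, rfl⟩
    exact ⟨k, by rw [mul_left_comm, Int.mul_ediv_cancel_left _ hs, two_mul]⟩
  · rintro ⟨k, hk⟩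
    refine ⟨k, mul_left_cancel₀ (two_ne_zero (α := ℤ)) ?_⟩
    rw [← Int.ediv_mul_cancel h, hk]
    ring

theorem mul_sq_modEq_zero_of_even (n : ℤ) {B : ℤ} (hB : Even B) :
    n * B ^ 2 ≡ 0 [ZMOD 4 * n] := by
  obtain ⟨k, rfl⟩ := hB
  exact (Int.modEq_zero_iff_dvd.mpr ⟨k ^ 2, by ring⟩)

theorem mul_sq_modEq_self_of_odd (n : ℤ) {B : ℤ} (hB : Odd B) :
    n * B ^ 2 ≡ n [ZMOD 4 * n] := by
  obtain ⟨k, rfl⟩ := hB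
  exact (Int.modEq_iff_dvd.mpr ⟨-(k ^ 2 + k), by ring⟩)

end Int

theorem heegner_discriminant_congruence_general
    (n : ℤ) (a b c m : ℤ)
    (s : ℤ) (hs : s = (Int.gcd (2 * n * a) (Int.gcd (2 * b) c : ℤ) : ℤ))
    (hspos : 0 < s)
    (e : ℤ) (he : e * s ^ 2 = 4 * n * (n * a ^ 2 + b ^ 2 + m * c ^ 2)) :
    s ∣ 2 * n * a ∧ s ∣ 2 * b ∧
      (s ∣ b → e ≡ (2 * n * a / s) ^ 2 [ZMOD 4 * n]) ∧
      (¬ s ∣ b → e ≡ (2 * n * a / s) ^ 2 + n [ZMOD 4 * n]) ∧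
      ∃ x : ℤ, x ^ 2 ≡ e [ZMOD 4 * n] ∨ x ^ 2 ≡ e - n [ZMOD 4 * n] := by
  have hs0 : s ≠ 0 := hspos.ne'
  have hgcd := Int.gcd_dvd_right (2 * n * a) (Int.gcd (2 * b) c : ℤ)
  have hsa : s ∣ 2 * n * a := hs ▸ Int.gcd_dvd_left _ _
  have hsb : s ∣ 2 * b := hs ▸ hgcd.trans (Int.gcd_dvd_left _ _)
  have hsc : s ∣ c := hs ▸ hgcd.trans (Int.gcd_dvd_right _ _)
  set A := 2 * n * a / s
  set B := 2 * b / s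
  have hred : e ≡ A ^ 2 + n * B ^ 2 [ZMOD 4 * n] := by
    have key := Int.eq_ediv_sq_add_of_mul_sq_eq (e := e) (n := n) (k := 4 * n * m) hs0 hsa hsb hsc
      (by linear_combination he)
    rw [key]
    exact Int.modEq_iff_dvd.mpr ⟨-(m * (c / s) ^ 2), by ring⟩
  have heven (h : s ∣ b) : e ≡ A ^ 2 [ZMOD 4 * n] := by
    simpa using hred.trans
      ((Int.mul_sq_modEq_zero_of_even n ((Int.dvd_iff_even_two_mul_ediv hs0 hsb).mp h)).add_left _)
  have hodd (h : ¬ s ∣ b) : e ≡ A ^ 2 + n [ZMOD 4 * n] := by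
    rw [Int.dvd_iff_even_two_mul_ediv hs0 hsb, Int.not_even_iff_odd] at h
    exact hred.trans ((Int.mul_sq_modEq_self_of_odd n h).add_left _)
  refine ⟨hsa, hsb, heven, hodd, A, ?_⟩
  by_cases h : s ∣ b
  · exact .inl (heven h).symm
  · exact .inr (Int.ModEq.add_right_cancel' n (by simpa using (hodd h).symm))

/-- Congruence for the discriminant of a Heegner divisor (divisibility 1): with
`s = gcd(2na, 2b, c)` positive and `e·s² = 4n(na² + b² + mc²)`, one has `s ∣ 2na`,
`s ∣ 2b`, and `e ≡ (2na/s)² (mod 4n)` if `s ∣ b`, while `e ≡ (2na/s)² + n (mod 4n)`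
otherwise; in particular `e` or `e − n` is a square modulo `4n`. -/
theorem heegner_discriminant_congruence
    (n : ℤ) (hn : 0 < n) (a b c m : ℤ)
    (hnz : ¬ (a = 0 ∧ b = 0 ∧ c = 0 ∧ m = 0))
    (s : ℤ) (hs : s = (Int.gcd (2 * n * a) (Int.gcd (2 * b) c : ℤ) : ℤ))
    (hspos : 0 < s)
    (e : ℤ) (he : e * s ^ 2 = 4 * n * (n * a ^ 2 + b ^ 2 + m * c ^ 2)) :
    s ∣ 2 * n * a ∧ s ∣ 2 * b ∧
      (s ∣ b → e ≡ (2 * n * a / s) ^ 2 [ZMOD 4 * n]) ∧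
      (¬ s ∣ b → e ≡ (2 * n * a / s) ^ 2 + n [ZMOD 4 * n]) ∧
      ∃ x : ℤ, x ^ 2 ≡ e [ZMOD 4 * n] ∨ x ^ 2 ≡ e - n [ZMOD 4 * n] :=
  heegner_discriminant_congruence_general n a b c m s hs hspos e he
end

section
/- Let n be a positive squarefree integer and let a, b, c, m be integers with gcd(a, b, c) = 1. Set s := gcd(2n·a, 2b, c) (a positive integer). If s² divides 4·(n·a² + b² + m·c²), then s = 1 or s = 2. -/
/-!
An odd prime `p ∣ s` divides `b` and `c`, and `p² ∣ s² ∣ 4(na² + b² + mc²)` leaves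
`p² ∣ na²`; as `p ∤ a` by coprimality, `p² ∣ n`, against squarefreeness. If `4 ∣ s`, the same
argument with `p = 2` applies: `2 ∣ b`, `2 ∣ c` and `16 ∣ 4(na² + b² + mc²)`. Since `s ≠ 0`, this forces `s ∣ 2`.
-/

theorem Nat.eq_one_or_two_of_not_four_dvd {t : ℕ} (ht : t ≠ 0)
    (hodd : ∀ p, p.Prime → p ∣ t → p = 2) (h4 : ¬ 4 ∣ t) : t = 1 ∨ t = 2 := by
  have htwo : t = 2 ^ t.primeFactorsList.length := eq_prime_pow_of_unique_prime_dvd ht (hodd _)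
  have hlen : t.primeFactorsList.length < 2 := by
    by_contra! hk
    exact h4 (htwo ▸ by simpa using Nat.pow_dvd_pow 2 hk)
  interval_cases h : t.primeFactorsList.length <;> simp_all

theorem not_sq_dvd_of_gcd_eq_one {n a b c m p : ℤ} (hn : Squarefree n)
    (hg : Int.gcd a (Int.gcd b c : ℤ) = 1) (hp : Prime p) (hb : p ∣ b) (hc : p ∣ c) :
    ¬ p ^ 2 ∣ n * a ^ 2 + b ^ 2 + m * c ^ 2 := by
  intro hX
  have hpa : ¬ p ∣ a := fun ha =>
    hp.not_dvd_one (by simpa [hg] using Int.dvd_coe_gcd ha (Int.dvd_coe_gcd hb hc))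
  have hna : p ^ 2 ∣ n * a ^ 2 :=
    (dvd_add_left (pow_dvd_pow_of_dvd hb 2)).mp
      ((dvd_add_left ((pow_dvd_pow_of_dvd hc 2).mul_left m)).mp hX)
  have hpn : p ^ 2 ∣ n := ((hp.coprime_iff_not_dvd.mpr hpa).pow).dvd_of_dvd_mul_right hna
  exact hp.not_isUnit (hn p (by rwa [← sq]))

theorem eq_two_of_prime_dvd_of_sq_dvd {n a b c m d : ℤ} (hn : Squarefree n)
    (hg : Int.gcd a (Int.gcd b c : ℤ) = 1) (hb : d ∣ 2 * b) (hc : d ∣ c)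
    (hX : d ^ 2 ∣ 4 * (n * a ^ 2 + b ^ 2 + m * c ^ 2)) {p : ℕ} (hp : p.Prime) (hpd : (p : ℤ) ∣ d) :
    p = 2 := by
  by_contra hp2
  have hpZ : Prime (p : ℤ) := Nat.prime_iff_prime_int.mp hp
  have hcop : IsCoprime (p : ℤ) 2 := hpZ.coprime_iff_not_dvd.mpr fun h =>
    hp2 ((Nat.prime_dvd_prime_iff_eq hp Nat.prime_two).mp (by exact_mod_cast h))
  have hpX : (p : ℤ) ^ 2 ∣ n * a ^ 2 + b ^ 2 + m * c ^ 2 :=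
    (hcop.pow (n := 2) (m := 2)).dvd_of_dvd_mul_left ((pow_dvd_pow_of_dvd hpd 2).trans hX)
  exact not_sq_dvd_of_gcd_eq_one hn hg hpZ (hcop.dvd_of_dvd_mul_left (hpd.trans hb))
    (hpd.trans hc) hpX

theorem not_four_dvd_of_sq_dvd {n a b c m d : ℤ} (hn : Squarefree n)
    (hg : Int.gcd a (Int.gcd b c : ℤ) = 1) (hb : d ∣ 2 * b) (hc : d ∣ c)
    (hX : d ^ 2 ∣ 4 * (n * a ^ 2 + b ^ 2 + m * c ^ 2)) : ¬ 4 ∣ d := by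
  intro h4
  have h2b : (2 : ℤ) ∣ b := (mul_dvd_mul_iff_left two_ne_zero).mp (h4.trans hb)
  have h2c : (2 : ℤ) ∣ c := (by norm_num : (2 : ℤ) ∣ 4).trans (h4.trans hc)
  have h2X : (2 : ℤ) ^ 2 ∣ n * a ^ 2 + b ^ 2 + m * c ^ 2 :=
    (mul_dvd_mul_iff_left four_ne_zero).mp ((pow_dvd_pow_of_dvd h4 2).trans hX)
  exact not_sq_dvd_of_gcd_eq_one hn hg Int.prime_two h2b h2c h2X

theorem divisibility_one_or_two_general
    (n : ℤ) (hnsf : Squarefree n)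
    (a b c m : ℤ) (hg : Int.gcd a (Int.gcd b c : ℤ) = 1)
    (s : ℤ) (hs : s = (Int.gcd (2 * n * a) (Int.gcd (2 * b) c : ℤ) : ℤ))
    (hdvd : s ^ 2 ∣ 4 * (n * a ^ 2 + b ^ 2 + m * c ^ 2)) :
    s = 1 ∨ s = 2 := by
  set t := Int.gcd (2 * n * a) (Int.gcd (2 * b) c : ℤ)
  subst hs
  have htbc : (t : ℤ) ∣ Int.gcd (2 * b) c := Int.gcd_dvd_right _ _
  have htb : (t : ℤ) ∣ 2 * b := htbc.trans (Int.gcd_dvd_left _ _)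
  have htc : (t : ℤ) ∣ c := htbc.trans (Int.gcd_dvd_right _ _)
  have ht0 : t ≠ 0 := by
    intro ht
    obtain ⟨rfl, rfl, rfl⟩ : a = 0 ∧ b = 0 ∧ c = 0 := by
      simpa [t, Int.gcd_eq_zero_iff, hnsf.ne_zero] using ht
    simp at hg
  have hodd : ∀ p, p.Prime → p ∣ t → p = 2 := fun p hp hpt =>
    eq_two_of_prime_dvd_of_sq_dvd hnsf hg htb htc hdvd hp (Int.natCast_dvd_natCast.mpr hpt)
  have h4 : ¬ 4 ∣ t := fun h4 =>
    not_four_dvd_of_sq_dvd hnsf hg htb htc hdvd (Int.natCast_dvd_natCast.mpr h4)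
  rcases Nat.eq_one_or_two_of_not_four_dvd ht0 hodd h4 with h | h <;> simp [h]

/-- If `n` is positive squarefree, `gcd(a, b, c) = 1`, `s = gcd(2na, 2b, c)`, and
`s² ∣ 4(na² + b² + mc²)`, then `s = 1` or `s = 2`. -/
theorem divisibility_one_or_two
    (n : ℤ) (hn : 0 < n) (hnsf : Squarefree n)
    (a b c m : ℤ) (hg : Int.gcd a (Int.gcd b c : ℤ) = 1)
    (s : ℤ) (hs : s = (Int.gcd (2 * n * a) (Int.gcd (2 * b) c : ℤ) : ℤ))
    (hdvd : s ^ 2 ∣ 4 * (n * a ^ 2 + b ^ 2 + m * c ^ 2)) :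
    s = 1 ∨ s = 2 :=
  divisibility_one_or_two_general n hnsf a b c m hg s hs hdvd
end

section
/- Let n and e be positive integers. Then the following are equivalent: (i) there exist integers a, b, c, m with gcd(a, b, c) = 1, n·a² + b² + m·c² > 0, and e·s² = 4n·(n·a² + b² + m·c²), where s := gcd(2n·a, 2b, c); (ii) there exists an integer x with x² ≡ e (mod 4n) or x² ≡ e − n (mod 4n). -/
/-!
Dividing `(2na, 2b, c)` by `s` turns the equation into `e = A² + nB² + 4nmC²`, and `nB²` is
`0` or `n` modulo `4n` according to the parity of `B`. Conversely, if `x² ≡ e - nt² (mod 4n)`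
then `(a, b, c) = (x, nt, 2n)` has `s = 2n` and works for a suitable `m`; since both sides of
the equation are homogeneous of degree 2 in `(a, b, c)`, it may be divided by `gcd(a, b, c)`.
-/

lemma Int.gcd_mul_left_gcd_mul_left (g x y z : ℤ) :
    Int.gcd (g * x) (Int.gcd (g * y) (g * z) : ℤ) = g.natAbs * Int.gcd x (Int.gcd y z : ℤ) := by
  simp only [Int.gcd, Int.natAbs_mul, Int.natAbs_natCast, Nat.gcd_mul_left]

lemma Int.gcd_gcd_eq_zero_iff {x y z : ℤ} :
    Int.gcd x (Int.gcd y z : ℤ) = 0 ↔ x = 0 ∧ y = 0 ∧ z = 0 := by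
  simp [Int.gcd_eq_zero_iff]

def HeegnerCondition (n e a b c m : ℤ) : Prop :=
  0 < n * a ^ 2 + b ^ 2 + m * c ^ 2 ∧
    e * ((Int.gcd (2 * n * a) (Int.gcd (2 * b) c : ℤ) : ℤ)) ^ 2 =
      4 * n * (n * a ^ 2 + b ^ 2 + m * c ^ 2)

namespace HeegnerCondition

variable {n e a b c m : ℤ}

lemma of_mul_left {g : ℤ} (h : HeegnerCondition n e (g * a) (g * b) (g * c) m) :
    HeegnerCondition n e a b c m := by
  obtain ⟨hpos, heq⟩ := h
  have hform : n * (g * a) ^ 2 + (g * b) ^ 2 + m * (g * c) ^ 2 =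
      g ^ 2 * (n * a ^ 2 + b ^ 2 + m * c ^ 2) := by ring
  have hgcd : (Int.gcd (2 * n * (g * a)) (Int.gcd (2 * (g * b)) (g * c) : ℤ) : ℤ) =
      |g| * Int.gcd (2 * n * a) (Int.gcd (2 * b) c : ℤ) := by
    rw [show 2 * n * (g * a) = g * (2 * n * a) by ring, show 2 * (g * b) = g * (2 * b) by ring,
      Int.gcd_mul_left_gcd_mul_left, Nat.cast_mul, Int.natCast_natAbs]
  rw [hform] at hpos heq
  rw [hgcd, mul_pow, sq_abs] at heq
  have hg : g ^ 2 ≠ 0 := by rintro hg; simp [hg] at hpos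
  exact ⟨pos_of_mul_pos_right hpos (sq_nonneg g),
    mul_left_cancel₀ hg (by linear_combination heq)⟩

lemma exists_primitive (h : HeegnerCondition n e a b c m) :
    ∃ a b c : ℤ, Int.gcd a (Int.gcd b c : ℤ) = 1 ∧ HeegnerCondition n e a b c m := by
  set g : ℕ := Int.gcd a (Int.gcd b c : ℤ)
  have hg : g ≠ 0 := by
    intro hg
    obtain ⟨rfl, rfl, rfl⟩ := Int.gcd_gcd_eq_zero_iff.mp hg
    simpa using h.1
  obtain ⟨a₀, ha⟩ : (g : ℤ) ∣ a := Int.gcd_dvd_left _ _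
  obtain ⟨b₀, hb⟩ : (g : ℤ) ∣ b := (Int.gcd_dvd_right _ _).trans (Int.gcd_dvd_left _ _)
  obtain ⟨c₀, hc⟩ : (g : ℤ) ∣ c := (Int.gcd_dvd_right _ _).trans (Int.gcd_dvd_right _ _)
  have hscale : g = g * Int.gcd a₀ (Int.gcd b₀ c₀ : ℤ) := calc
    g = Int.gcd (g * a₀) (Int.gcd (g * b₀) (g * c₀) : ℤ) := by rw [← ha, ← hb, ← hc]
    _ = g * Int.gcd a₀ (Int.gcd b₀ c₀ : ℤ) := by
      rw [Int.gcd_mul_left_gcd_mul_left, Int.natAbs_natCast]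
  rw [ha, hb, hc] at h
  exact ⟨a₀, b₀, c₀, (Nat.mul_eq_left hg).mp hscale.symm, h.of_mul_left⟩

lemma exists_eq_sq_add (h : HeegnerCondition n e a b c m) :
    ∃ A B C : ℤ, e = A ^ 2 + n * B ^ 2 + 4 * n * m * C ^ 2 := by
  obtain ⟨hpos, heq⟩ := h
  set s : ℕ := Int.gcd (2 * n * a) (Int.gcd (2 * b) c : ℤ)
  have hs : (s : ℤ) ^ 2 ≠ 0 := by
    refine pow_ne_zero _ (Int.natCast_ne_zero.mpr fun hs => ?_)
    obtain ⟨h2na, h2b, rfl⟩ := Int.gcd_gcd_eq_zero_iff.mp hs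
    obtain rfl : b = 0 := by simpa using h2b
    have hna : n * a = 0 := by linarith
    have : n * a ^ 2 = 0 := by linear_combination a * hna
    simp [this] at hpos
  obtain ⟨A, hA⟩ : (s : ℤ) ∣ 2 * n * a := Int.gcd_dvd_left _ _
  obtain ⟨B, hB⟩ : (s : ℤ) ∣ 2 * b := (Int.gcd_dvd_right _ _).trans (Int.gcd_dvd_left _ _)
  obtain ⟨C, hC⟩ : (s : ℤ) ∣ c := (Int.gcd_dvd_right _ _).trans (Int.gcd_dvd_right _ _)
  refine ⟨A, B, C, mul_right_cancel₀ hs ?_⟩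
  linear_combination heq + (2 * n * a + s * A) * hA + n * (2 * b + s * B) * hB +
    4 * n * m * (c + s * C) * hC

lemma exists_sq_modEq (h : HeegnerCondition n e a b c m) :
    ∃ x t : ℤ, x ^ 2 ≡ e - n * t ^ 2 [ZMOD 4 * n] := by
  obtain ⟨A, B, C, he⟩ := h.exists_eq_sq_add
  exact ⟨A, B, Int.modEq_iff_dvd.mpr ⟨m * C ^ 2, by linear_combination he⟩⟩

end HeegnerCondition

lemma heegnerCondition_of_sq_modEq {n e x t : ℤ} (hn : 0 < n) (he : 0 < e)
    (hx : x ^ 2 ≡ e - n * t ^ 2 [ZMOD 4 * n]) :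
    ∃ m : ℤ, HeegnerCondition n e x (n * t) (2 * n) m := by
  obtain ⟨k, hk⟩ := Int.modEq_iff_dvd.mp hx
  have hgcd : (Int.gcd (2 * n * x) (Int.gcd (2 * (n * t)) (2 * n) : ℤ) : ℤ) = 2 * n := by
    apply Int.dvd_antisymm (Int.natCast_nonneg _) (by positivity)
    · exact (Int.gcd_dvd_right _ _).trans (Int.gcd_dvd_right _ _)
    · exact Int.dvd_coe_gcd ⟨x, by ring⟩ (Int.dvd_coe_gcd ⟨t, by ring⟩ dvd_rfl)
  have hform : n * x ^ 2 + (n * t) ^ 2 + k * (2 * n) ^ 2 = n * e := by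
    linear_combination (-n) * hk
  refine ⟨k, ?_, ?_⟩
  · rw [hform]; positivity
  · rw [hgcd, hform]; ring

lemma exists_sq_modEq_sub_mul_sq_iff {n e : ℤ} :
    (∃ x t : ℤ, x ^ 2 ≡ e - n * t ^ 2 [ZMOD 4 * n]) ↔
      ∃ x : ℤ, x ^ 2 ≡ e [ZMOD 4 * n] ∨ x ^ 2 ≡ e - n [ZMOD 4 * n] := by
  constructor
  · rintro ⟨x, t, hx⟩
    refine ⟨x, ?_⟩
    rcases Int.even_or_odd' t with ⟨u, rfl | rfl⟩
    · left
      exact hx.trans (Int.modEq_iff_dvd.mpr ⟨u ^ 2, by ring⟩)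
    · right
      exact hx.trans (Int.modEq_iff_dvd.mpr ⟨u ^ 2 + u, by ring⟩)
  · rintro ⟨x, hx | hx⟩
    · exact ⟨x, 0, by simpa using hx⟩
    · exact ⟨x, 1, by simpa using hx⟩

/-- Nonemptiness criterion for the Heegner divisor `D^{(1)}_{2n,2e}`: there exist
integers `a, b, c, m` with `gcd(a, b, c) = 1`, `na² + b² + mc² > 0`, and
`e·s² = 4n(na² + b² + mc²)` where `s = gcd(2na, 2b, c)`, if and only if `e` or `e − n`
is a square modulo `4n`. -/
theorem heegner_divisor_nonempty_iff
    (n e : ℤ) (hn : 0 < n) (he : 0 < e) :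
    (∃ a b c m : ℤ, Int.gcd a (Int.gcd b c : ℤ) = 1 ∧
        0 < n * a ^ 2 + b ^ 2 + m * c ^ 2 ∧
        e * ((Int.gcd (2 * n * a) (Int.gcd (2 * b) c : ℤ) : ℤ)) ^ 2 =
          4 * n * (n * a ^ 2 + b ^ 2 + m * c ^ 2)) ↔
      ∃ x : ℤ, x ^ 2 ≡ e [ZMOD 4 * n] ∨ x ^ 2 ≡ e - n [ZMOD 4 * n] := by
  rw [← exists_sq_modEq_sub_mul_sq_iff]
  constructor
  · rintro ⟨a, b, c, m, -, h⟩
    exact HeegnerCondition.exists_sq_modEq h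
  · rintro ⟨x, t, hx⟩
    obtain ⟨m, h⟩ := heegnerCondition_of_sq_modEq hn he hx
    obtain ⟨a, b, c, hgcd, h⟩ := h.exists_primitive
    exact ⟨a, b, c, m, hgcd, h⟩
end
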